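/- arXiv:1604.05185 — 4 statements merged into one kernel-verified Lean document; each statement's English description precedes it below -/
import Mathlib

section
/- Assume f : Ω × ℝ → ℝ is a Carathéodory function with |f(x,t)| ≤ a₀(1+|t|^{p-1}) for some a₀ > 0 and p ∈ (2, 2*_s), and suppose limsup_{|t|→∞} F(x,t)/t² ≤ 0 uniformly for a.e. x ∈ Ω, where F(x,t) = ∫₀ᵗ f(x,τ)dτ. Then the energy functional φ(u) = ‖u‖²/2 − ∫_Ω F(x,u)dx is coercive on H^s_0(Ω), i.e., φ(u) → ∞ as ‖u‖ → ∞. -/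
open MeasureTheory

/-- The Gagliardo bilinear form. -/
noncomputable def gform (N : ℕ) (s : ℝ) (u v : EuclideanSpace ℝ (Fin N) → ℝ) : ℝ :=
  ∫ z : EuclideanSpace ℝ (Fin N) × EuclideanSpace ℝ (Fin N),
    ((u z.1 - u z.2) * (v z.1 - v z.2)) / ‖z.1 - z.2‖ ^ ((N : ℝ) + 2 * s)

/-- Membership in the fractional Sobolev space `H^s_0(Ω)`. -/
def MemHs0 (N : ℕ) (s : ℝ) (Ω : Set (EuclideanSpace ℝ (Fin N)))
    (u : EuclideanSpace ℝ (Fin N) → ℝ) : Prop :=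
  MemLp u 2 (volume : Measure (EuclideanSpace ℝ (Fin N))) ∧
  (∀ᵐ x ∂(volume : Measure (EuclideanSpace ℝ (Fin N))), x ∉ Ω → u x = 0) ∧
  Integrable (fun z : EuclideanSpace ℝ (Fin N) × EuclideanSpace ℝ (Fin N) =>
    (u z.1 - u z.2) ^ 2 / ‖z.1 - z.2‖ ^ ((N : ℝ) + 2 * s)) volume

/-!
Given `ε > 0`, the limsup hypothesis bounds `F(x,t)` by `ε t²` for `|t| ≥ M`, and the growth
bound on `f` bounds `|F(x,t)|` by a constant `C` for `|t| < M`; so `F(x,t) ≤ ε t² + C`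
everywhere. Integrating over `Ω` and using `λ₁ ‖u‖₂² ≤ ‖u‖²` with `ε = λ₁/4` gives
`φ(u) ≥ ‖u‖²/4 - C |Ω|`.
-/

theorem gform_self_nonneg (N : ℕ) (s : ℝ) (u : EuclideanSpace ℝ (Fin N) → ℝ) :
    0 ≤ gform N s u u :=
  integral_nonneg fun _ => div_nonneg (mul_self_nonneg _) (Real.rpow_nonneg (norm_nonneg _) _)

theorem abs_primitive_le_of_abs_le {g : ℝ → ℝ} {B M t : ℝ}
    (hg : ∀ τ, |τ| ≤ M → |g τ| ≤ B) (ht : |t| ≤ M) :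
    |∫ τ in (0 : ℝ)..t, g τ| ≤ B * M := by
  have hB : 0 ≤ B := (abs_nonneg _).trans (hg 0 (by simpa using (abs_nonneg t).trans ht))
  have hbound : ∀ τ ∈ Set.uIoc 0 t, ‖g τ‖ ≤ B := fun τ hτ => by
    have := Set.abs_sub_left_of_mem_uIcc (Set.uIoc_subset_uIcc hτ)
    exact hg τ (by simpa using this.trans (by simpa using ht))
  calc |∫ τ in (0 : ℝ)..t, g τ| ≤ B * |t - 0| :=
        intervalIntegral.norm_integral_le_of_norm_le_const hbound
    _ ≤ B * M := by rw [sub_zero]; exact mul_le_mul_of_nonneg_left ht hB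

theorem primitive_le_sq_add_const {g : ℝ → ℝ} {ε B M : ℝ} (hε : 0 ≤ ε) (hM : 0 ≤ M)
    (hg : ∀ τ, |τ| ≤ M → |g τ| ≤ B) (htail : ∀ t, M ≤ |t| → ∫ τ in (0 : ℝ)..t, g τ ≤ ε * t ^ 2)
    (t : ℝ) : ∫ τ in (0 : ℝ)..t, g τ ≤ ε * t ^ 2 + B * M := by
  rcases le_or_gt M |t| with ht | ht
  · have hB : 0 ≤ B := (abs_nonneg _).trans (hg 0 (by simpa using hM))
    nlinarith [htail t ht]
  · nlinarith [le_abs_self (∫ τ in (0 : ℝ)..t, g τ), abs_primitive_le_of_abs_le hg ht.le]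

theorem setIntegral_le_of_ae_le_sq_add_const {α : Type*} [MeasurableSpace α] {μ : Measure α}
    {s : Set α} (hs : μ s ≠ ⊤) {F u : α → ℝ} {c C : ℝ} (hc : 0 ≤ c) (hC : 0 ≤ C)
    (hu : IntegrableOn (fun x => u x ^ 2) s μ) (hF : ∀ᵐ x ∂μ.restrict s, F x ≤ c * u x ^ 2 + C) :
    ∫ x in s, F x ∂μ ≤ c * ∫ x in s, u x ^ 2 ∂μ + C * μ.real s := by
  have hRHS : ∫ x in s, (c * u x ^ 2 + C) ∂μ = c * ∫ x in s, u x ^ 2 ∂μ + C * μ.real s := by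
    rw [integral_add (hu.const_mul c) (integrableOn_const hs), integral_const_mul,
      setIntegral_const, smul_eq_mul, mul_comm (μ.real s)]
  by_cases hFi : IntegrableOn F s μ
  · exact hRHS ▸ integral_mono_ae hFi ((hu.const_mul c).add (integrableOn_const hs)) hF
  · rw [integral_undef hFi]
    have : 0 ≤ ∫ x in s, u x ^ 2 ∂μ := integral_nonneg fun _ => sq_nonneg _
    positivity

theorem stmt_2_general (N : ℕ) (s : ℝ)
    (Ω : Set (EuclideanSpace ℝ (Fin N))) (hΩ : Bornology.IsBounded Ω)
    (f : EuclideanSpace ℝ (Fin N) → ℝ → ℝ)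
    -- subcritical growth, p ∈ (2, 2*_s)
    (a₀ p : ℝ) (ha₀ : 0 < a₀) (hp2 : 2 < p)
    (hgrowth : ∀ᵐ x ∂(volume.restrict Ω), ∀ t : ℝ, |f x t| ≤ a₀ * (1 + |t| ^ (p - 1)))
    -- limsup_{|t|→∞} F(x,t)/t² ≤ 0 uniformly for a.e. x ∈ Ω
    (hlimsup : ∀ ε > (0 : ℝ), ∃ M > (0 : ℝ), ∀ᵐ x ∂(volume.restrict Ω),
      ∀ t : ℝ, M ≤ |t| → (∫ τ in (0 : ℝ)..t, f x τ) ≤ ε * t ^ 2)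
    -- first eigenvalue: best constant of the embedding H^s_0(Ω) ↪ L²
    (lam1 : ℝ) (hlam1 : 0 < lam1)
    (hemb : ∀ u : EuclideanSpace ℝ (Fin N) → ℝ, MemHs0 N s Ω u →
      lam1 * ∫ x, (u x) ^ 2 ≤ gform N s u u) :
    -- coercivity: φ(u) → ∞ as ‖u‖ → ∞
    ∀ M₀ : ℝ, ∃ R : ℝ, ∀ u : EuclideanSpace ℝ (Fin N) → ℝ, MemHs0 N s Ω u →
      R ≤ Real.sqrt (gform N s u u) →
      M₀ ≤ gform N s u u / 2 - ∫ x in Ω, (∫ τ in (0 : ℝ)..(u x), f x τ) := by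
  intro M₀
  obtain ⟨M, hM, htail⟩ := hlimsup (lam1 / 4) (by positivity)
  set C := a₀ * (1 + M ^ (p - 1)) * M
  have hC : 0 ≤ C := by positivity
  have hF : ∀ᵐ x ∂volume.restrict Ω, ∀ t, ∫ τ in (0 : ℝ)..t, f x τ ≤ lam1 / 4 * t ^ 2 + C := by
    filter_upwards [hgrowth, htail] with x hgx htx
    refine primitive_le_sq_add_const (by positivity) hM.le (fun τ hτ => (hgx τ).trans ?_) htx
    gcongr
    linarith
  refine ⟨√(4 * (M₀ + C * volume.real Ω)), fun u hu hR => ?_⟩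
  have hnorm := (Real.sqrt_le_sqrt_iff (gform_self_nonneg N s u)).1 hR
  have hu2 := hu.1.integrable_sq
  have hFu := setIntegral_le_of_ae_le_sq_add_const hΩ.measure_lt_top.ne (by positivity) hC
    hu2.integrableOn (hF.mono fun x hx => hx (u x))
  have hΩu := mul_le_mul_of_nonneg_left
    (setIntegral_le_integral (s := Ω) hu2 (ae_of_all _ fun x => sq_nonneg (u x))) hlam1.le
  linarith [hemb u hu]

/-- Sublinear reaction: if `f` is Carathéodory with subcritical growth and
`limsup_{|t|→∞} F(x,t)/t² ≤ 0` uniformly for a.e. `x ∈ Ω`, then the energy functional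
`φ(u) = ‖u‖²/2 − ∫_Ω F(x,u) dx` is coercive on `H^s_0(Ω)`. -/
theorem stmt_2 (N : ℕ) (hN : 1 < N) (s : ℝ) (hs : s ∈ Set.Ioo (0 : ℝ) 1)
    (hNs : 2 * s < (N : ℝ))
    (Ω : Set (EuclideanSpace ℝ (Fin N))) (hΩ : Bornology.IsBounded Ω)
    (hΩm : MeasurableSet Ω)
    (f : EuclideanSpace ℝ (Fin N) → ℝ → ℝ)
    -- f Carathéodory
    (hfmeas : ∀ t : ℝ, Measurable fun x => f x t)
    (hfcont : ∀ᵐ x ∂(volume : Measure (EuclideanSpace ℝ (Fin N))), Continuous (f x))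
    -- subcritical growth, p ∈ (2, 2*_s)
    (a₀ p : ℝ) (ha₀ : 0 < a₀) (hp2 : 2 < p) (hpc : p < 2 * (N : ℝ) / ((N : ℝ) - 2 * s))
    (hgrowth : ∀ᵐ x ∂(volume.restrict Ω), ∀ t : ℝ, |f x t| ≤ a₀ * (1 + |t| ^ (p - 1)))
    -- limsup_{|t|→∞} F(x,t)/t² ≤ 0 uniformly for a.e. x ∈ Ω
    (hlimsup : ∀ ε > (0 : ℝ), ∃ M > (0 : ℝ), ∀ᵐ x ∂(volume.restrict Ω),
      ∀ t : ℝ, M ≤ |t| → (∫ τ in (0 : ℝ)..t, f x τ) ≤ ε * t ^ 2)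
    -- first eigenvalue: best constant of the embedding H^s_0(Ω) ↪ L²
    (lam1 : ℝ) (hlam1 : 0 < lam1)
    (hemb : ∀ u : EuclideanSpace ℝ (Fin N) → ℝ, MemHs0 N s Ω u →
      lam1 * ∫ x, (u x) ^ 2 ≤ gform N s u u) :
    -- coercivity: φ(u) → ∞ as ‖u‖ → ∞
    ∀ M₀ : ℝ, ∃ R : ℝ, ∀ u : EuclideanSpace ℝ (Fin N) → ℝ, MemHs0 N s Ω u →
      R ≤ Real.sqrt (gform N s u u) →
      M₀ ≤ gform N s u u / 2 - ∫ x in Ω, (∫ τ in (0 : ℝ)..(u x), f x τ) :=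
  stmt_2_general N s Ω hΩ f a₀ p ha₀ hp2 hgrowth hlimsup lam1 hlam1 hemb
end

section
/- Let ρ : S → (1, ∞) be continuous, where S is the unit sphere of a normed space X, and set A = {μu : u ∈ S, μ ≥ ρ(u)} and E = {μu : u ∈ S, μ ≥ 1}. Then A is a strong deformation retract of E via h(t, μu) = (1−t)μu + t·max(μ, ρ(u))·u. -/
lemma aux_norm_pos {X : Type*} [NormedAddCommGroup X] (x : X) (hx : 1 ≤ ‖x‖) :
    (0:ℝ) < ‖x‖ := lt_of_lt_of_le one_pos hx

lemma aux_unit {X : Type*} [NormedAddCommGroup X] [NormedSpace ℝ X] (x : X) (hx : 1 ≤ ‖x‖) :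
    ‖(‖x‖⁻¹ • x)‖ = 1 := by
  have h := aux_norm_pos x hx
  rw [norm_smul, norm_inv, norm_norm, inv_mul_cancel₀ h.ne']

lemma aux_eq {X : Type*} [NormedAddCommGroup X] [NormedSpace ℝ X] (x : X) (hx : 1 ≤ ‖x‖)
    (t ρ' : ℝ) :
    (1 - t) • x + (t * max ‖x‖ ρ') • (‖x‖⁻¹ • x)
      = ((1 - t) * ‖x‖ + t * max ‖x‖ ρ') • (‖x‖⁻¹ • x) := by
  have h := aux_norm_pos x hx
  rw [add_smul, smul_smul, smul_smul, mul_inv_cancel_right₀ h.ne']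

/-- Let `ρ : S → (1,∞)` be continuous on the unit sphere `S` of a normed space `X`, and let
`A = {μu : u ∈ S, μ ≥ ρ(u)}`, `E = {μu : u ∈ S, μ ≥ 1}`. Then `A` is a strong deformation
retract of `E` via `h(t, μu) = (1−t)μu + t·max(μ, ρ(u))·u`. -/
theorem stmt_12 {X : Type*} [NormedAddCommGroup X] [NormedSpace ℝ X]
    (ρ : X → ℝ)
    (hρcont : ContinuousOn ρ (Metric.sphere (0 : X) 1))
    (hρ : ∀ u ∈ Metric.sphere (0 : X) 1, 1 < ρ u)
    (E A : Set X)
    (hE : E = {x : X | 1 ≤ ‖x‖})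
    (hA : A = {x : X | 1 ≤ ‖x‖ ∧ ρ (‖x‖⁻¹ • x) ≤ ‖x‖}) :
    A ⊆ E ∧
    ContinuousOn
      (fun p : ℝ × X =>
        (1 - p.1) • p.2 + (p.1 * max ‖p.2‖ (ρ (‖p.2‖⁻¹ • p.2))) • (‖p.2‖⁻¹ • p.2))
      (Set.Icc (0 : ℝ) 1 ×ˢ E) ∧
    (∀ x ∈ E,
      (1 - (0:ℝ)) • x + ((0:ℝ) * max ‖x‖ (ρ (‖x‖⁻¹ • x))) • (‖x‖⁻¹ • x) = x) ∧
    (∀ x ∈ E,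
      (1 - (1:ℝ)) • x + ((1:ℝ) * max ‖x‖ (ρ (‖x‖⁻¹ • x))) • (‖x‖⁻¹ • x) ∈ A) ∧
    (∀ t ∈ Set.Icc (0 : ℝ) 1, ∀ x ∈ A,
      (1 - t) • x + (t * max ‖x‖ (ρ (‖x‖⁻¹ • x))) • (‖x‖⁻¹ • x) = x) ∧
    (∀ t ∈ Set.Icc (0 : ℝ) 1, ∀ x ∈ E,
      (1 - t) • x + (t * max ‖x‖ (ρ (‖x‖⁻¹ • x))) • (‖x‖⁻¹ • x) ∈ E) := by
  subst hE hA
  refine ⟨fun x hx => hx.1, ?_, ?_, ?_, ?_, ?_⟩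
  · -- continuity
    have hnorm : ∀ p : ℝ × X, p ∈ Set.Icc (0:ℝ) 1 ×ˢ {x : X | 1 ≤ ‖x‖} → ‖p.2‖ ≠ 0 :=
      fun p hp => (aux_norm_pos p.2 hp.2).ne'
    have hgcont : ContinuousOn (fun p : ℝ × X => ‖p.2‖⁻¹ • p.2)
        (Set.Icc (0:ℝ) 1 ×ˢ {x : X | 1 ≤ ‖x‖}) :=
      ((continuous_norm.comp continuous_snd).continuousOn.inv₀ hnorm).smul
        continuous_snd.continuousOn
    have hρg : ContinuousOn (fun p : ℝ × X => ρ (‖p.2‖⁻¹ • p.2))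
        (Set.Icc (0:ℝ) 1 ×ˢ {x : X | 1 ≤ ‖x‖}) := by
      refine hρcont.comp hgcont fun p hp => ?_
      simp [Metric.mem_sphere, aux_unit p.2 hp.2]
    exact ((continuous_const.sub continuous_fst).continuousOn.smul
        continuous_snd.continuousOn).add
      ((continuous_fst.continuousOn.mul
        (((continuous_norm.comp continuous_snd).continuousOn).sup hρg)).smul hgcont)
  · intro x hx; simp
  · intro x hx
    have hx1 : (1:ℝ) ≤ ‖x‖ := hx
    have hu : ‖(‖x‖⁻¹ • x)‖ = 1 := aux_unit x hx1
    have hm1 : (1:ℝ) ≤ max ‖x‖ (ρ (‖x‖⁻¹ • x)) := le_max_of_le_left hx1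
    have hmpos : (0:ℝ) < max ‖x‖ (ρ (‖x‖⁻¹ • x)) := lt_of_lt_of_le one_pos hm1
    have key : (1 - (1:ℝ)) • x + ((1:ℝ) * max ‖x‖ (ρ (‖x‖⁻¹ • x))) • (‖x‖⁻¹ • x)
        = (max ‖x‖ (ρ (‖x‖⁻¹ • x))) • (‖x‖⁻¹ • x) := by
      simp
    rw [key]
    have hnormval : ‖(max ‖x‖ (ρ (‖x‖⁻¹ • x))) • (‖x‖⁻¹ • x)‖
        = max ‖x‖ (ρ (‖x‖⁻¹ • x)) := by
      rw [norm_smul, hu, mul_one, Real.norm_eq_abs, abs_of_pos hmpos]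
    constructor
    · rw [hnormval]; exact hm1
    · rw [hnormval]
      rw [smul_smul, inv_mul_cancel₀ hmpos.ne', one_smul]
      exact le_max_right _ _
  · intro t ht x hx
    obtain ⟨hx1, hxρ⟩ := hx
    have h := aux_norm_pos x hx1
    have hmax : max ‖x‖ (ρ (‖x‖⁻¹ • x)) = ‖x‖ := max_eq_left hxρ
    rw [hmax, smul_smul, mul_assoc, mul_inv_cancel₀ h.ne', mul_one, ← add_smul]
    ring_nf
    rw [one_smul]
  · intro t ht x hx
    have hx1 : (1:ℝ) ≤ ‖x‖ := hx
    have hu : ‖(‖x‖⁻¹ • x)‖ = 1 := aux_unit x hx1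
    rw [aux_eq x hx1]
    have hc : (1:ℝ) ≤ (1 - t) * ‖x‖ + t * max ‖x‖ (ρ (‖x‖⁻¹ • x)) := by
      have h1 : (1 - t) * 1 ≤ (1 - t) * ‖x‖ :=
        mul_le_mul_of_nonneg_left hx1 (by linarith [ht.2])
      have h2 : t * 1 ≤ t * max ‖x‖ (ρ (‖x‖⁻¹ • x)) :=
        mul_le_mul_of_nonneg_left (le_max_of_le_left hx1) ht.1
      linarith
    show (1:ℝ) ≤ ‖_‖
    rw [norm_smul, hu, mul_one, Real.norm_eq_abs, abs_of_pos (lt_of_lt_of_le one_pos hc)]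
    exact hc
end

section
/- Let H be a Hilbert space, φ ∈ C¹(H) with φ(u) = ‖u‖²/2 − ψ(u), and suppose that for all u with ‖u‖ ≥ 1 and φ(u) = c one has φ'(u)(u) < 0, and that for each u in the unit sphere S, μ ↦ φ(μu) tends to −∞ as μ → ∞ and φ(μu) > c for μ = 1. Then there exists a unique continuous function ρ : S → (1, ∞) such that for μ > 1: φ(μu) > c if μ < ρ(u), φ(μu) = c if μ = ρ(u), and φ(μu) < c if μ > ρ(u). -/
/-!
Along a ray, `g μ = φ (μ • u)` has negative derivative wherever it meets the level `c`, so once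
`g ≤ c` at some point it stays `≤ c` afterwards (real induction on the closed set `{g ≤ c}`), and
in fact `< c`. Hence the ray, which starts above `c` and tends to `-∞`, crosses the level exactly
once, at `ρ u`. Continuity of `ρ` comes from `μ < ρ u ↔ c < φ (μ • u)` and
`ρ u < μ ↔ φ (μ • u) < c`: both are open conditions in `u`.
-/

open Filter Set Topology

section SignOfDerivative

variable {g : ℝ → ℝ} {g' t : ℝ}

theorem HasDerivAt.eventually_nhdsGT_lt (hg : HasDerivAt g g' t) (h : g' < 0) :
    ∀ᶠ s in 𝓝[>] t, g s < g t := by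
  have hslope : ∀ᶠ s in 𝓝[≠] t, slope g t s < 0 :=
    (hasDerivAt_iff_tendsto_slope.mp hg).eventually (eventually_lt_nhds h)
  filter_upwards [nhdsGT_le_nhdsNE t hslope, self_mem_nhdsWithin] with s hs hts
  exact (slope_neg_iff_of_le (le_of_lt hts)).mp hs

theorem HasDerivAt.eventually_nhdsLT_gt (hg : HasDerivAt g g' t) (h : g' < 0) :
    ∀ᶠ s in 𝓝[<] t, g t < g s := by
  have hslope : ∀ᶠ s in 𝓝[≠] t, slope g t s < 0 :=
    (hasDerivAt_iff_tendsto_slope.mp hg).eventually (eventually_lt_nhds h)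
  filter_upwards [nhdsLT_le_nhdsNE t hslope, self_mem_nhdsWithin] with s hs hst
  rw [slope_comm] at hs
  exact (slope_neg_iff_of_le (le_of_lt hst)).mp hs

end SignOfDerivative

section LevelCrossing

variable {g g' : ℝ → ℝ} {c a t : ℝ}

theorem le_of_hasDerivAt_neg_of_eq (hg : ∀ t, HasDerivAt g (g' t) t)
    (hneg : ∀ t, a ≤ t → g t = c → g' t < 0) (ha : g a ≤ c) (ht : a ≤ t) : g t ≤ c := by
  have hcont : Continuous g := continuous_iff_continuousAt.mpr fun t => (hg t).continuousAt
  refine IsClosed.Icc_subset_of_forall_mem_nhdsWithin (s := {x | g x ≤ c})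
    ((isClosed_le hcont continuous_const).inter isClosed_Icc) ha ?_ ⟨ht, le_rfl⟩
  rintro s ⟨hs : g s ≤ c, has, -⟩
  rcases hs.lt_or_eq with hlt | heq
  · filter_upwards [nhdsWithin_le_nhds (hcont.continuousAt.eventually_lt continuousAt_const hlt)]
      with x hx using hx.le
  · filter_upwards [(hg s).eventually_nhdsGT_lt (hneg s has heq)] with x hx
    exact heq ▸ hx.le

theorem lt_of_hasDerivAt_neg_of_eq (hg : ∀ t, HasDerivAt g (g' t) t)
    (hneg : ∀ t, a ≤ t → g t = c → g' t < 0) (ha : g a ≤ c) (ht : a < t) : g t < c := by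
  refine (le_of_hasDerivAt_neg_of_eq hg hneg ha ht.le).lt_of_ne fun heq => ?_
  obtain ⟨s, hcs, has, -⟩ := (((hg t).eventually_nhdsLT_gt (hneg t ht.le heq)).and
    (Ioo_mem_nhdsLT ht)).exists
  exact (heq ▸ hcs).not_ge (le_of_hasDerivAt_neg_of_eq hg hneg ha has.le)

def IsDowncrossing (g : ℝ → ℝ) (c a r : ℝ) : Prop :=
  a < r ∧ ∀ μ, a < μ → (μ < r → c < g μ) ∧ (μ = r → g μ = c) ∧ (r < μ → g μ < c)

theorem exists_isDowncrossing (hg : ∀ t, HasDerivAt g (g' t) t)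
    (hneg : ∀ t, a < t → g t = c → g' t < 0) (ha : c < g a) (hbot : Tendsto g atTop atBot) :
    ∃ r, IsDowncrossing g c a r := by
  have hcont : Continuous g := continuous_iff_continuousAt.mpr fun t => (hg t).continuousAt
  obtain ⟨M, hM, haM⟩ := ((hbot.eventually (eventually_lt_atBot c)).and
    (eventually_ge_atTop a)).exists
  obtain ⟨r, ⟨har, -⟩, hr⟩ := intermediate_value_Icc' haM hcont.continuousOn ⟨hM.le, ha.le⟩
  have har : a < r := har.lt_of_ne (by rintro rfl; exact ha.ne' hr)
  refine ⟨r, har, fun μ hμ => ⟨fun hμr => ?_, fun hμr => hμr ▸ hr, fun hrμ => ?_⟩⟩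
  · by_contra! hle
    exact (lt_of_hasDerivAt_neg_of_eq hg (fun t ht => hneg t (hμ.trans_le ht)) hle hμr).ne hr
  · exact lt_of_hasDerivAt_neg_of_eq hg (fun t ht => hneg t (har.trans_le ht)) hr.le hrμ

end LevelCrossing

namespace IsDowncrossing

variable {g : ℝ → ℝ} {c a r r' μ : ℝ}

theorem lt_iff_lt (h : IsDowncrossing g c a r) (hμ : a < μ) : μ < r ↔ c < g μ := by
  refine ⟨(h.2 μ hμ).1, fun hc => ?_⟩
  by_contra! hrμ
  rcases hrμ.lt_or_eq with hrμ | rfl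
  · exact (((h.2 μ hμ).2.2 hrμ).trans hc).false
  · exact hc.ne' ((h.2 r hμ).2.1 rfl)

theorem lt_iff_gt (h : IsDowncrossing g c a r) (hμ : a < μ) : r < μ ↔ g μ < c := by
  refine ⟨(h.2 μ hμ).2.2, fun hc => ?_⟩
  by_contra! hμr
  rcases hμr.lt_or_eq with hμr | rfl
  · exact (((h.2 μ hμ).1 hμr).trans hc).false
  · exact hc.ne ((h.2 μ hμ).2.1 rfl)

theorem unique (h : IsDowncrossing g c a r) (h' : IsDowncrossing g c a r') : r' = r := by
  have hr' : g r' = c := (h'.2 r' h'.1).2.1 rfl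
  refine le_antisymm (not_lt.mp fun hlt => ?_) (not_lt.mp fun hlt => ?_)
  · exact ((h.lt_iff_gt h'.1).mp hlt).ne hr'
  · exact ((h.lt_iff_lt h'.1).mp hlt).ne' hr'

end IsDowncrossing

theorem continuousOn_of_isDowncrossing {X : Type*} [TopologicalSpace X] {F : X → ℝ → ℝ}
    {s : Set X} {ρ : X → ℝ} {c a : ℝ} (hF : ∀ μ, Continuous fun x => F x μ)
    (hρ : ∀ x ∈ s, IsDowncrossing (F x) c a (ρ x)) : ContinuousOn ρ s := by
  intro x₀ hx₀
  refine tendsto_order.2 ⟨fun b hb => ?_, fun b hb => ?_⟩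
  · rcases le_or_gt b a with hba | hab
    · filter_upwards [self_mem_nhdsWithin] with x hx using hba.trans_lt (hρ x hx).1
    have hc : c < F x₀ b := ((hρ x₀ hx₀).lt_iff_lt hab).mp hb
    filter_upwards [self_mem_nhdsWithin,
      nhdsWithin_le_nhds (continuousAt_const.eventually_lt (hF b).continuousAt hc)] with x hx hcx
    exact ((hρ x hx).lt_iff_lt hab).mpr hcx
  · have hab : a < b := (hρ x₀ hx₀).1.trans hb
    have hc : F x₀ b < c := ((hρ x₀ hx₀).lt_iff_gt hab).mp hb
    filter_upwards [self_mem_nhdsWithin,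
      nhdsWithin_le_nhds ((hF b).continuousAt.eventually_lt continuousAt_const hc)] with x hx hcx
    exact ((hρ x hx).lt_iff_gt hab).mpr hcx

theorem hasDerivAt_comp_smul_const {E : Type*} [NormedAddCommGroup E] [NormedSpace ℝ E]
    {φ : E → ℝ} {u : E} {t : ℝ} (hφ : DifferentiableAt ℝ φ (t • u)) :
    HasDerivAt (fun μ : ℝ => φ (μ • u)) (fderiv ℝ φ (t • u) u) t := by
  have := hφ.hasFDerivAt.comp_hasDerivAt t ((hasDerivAt_id' t).smul_const u)
  rwa [one_smul] at this

theorem stmt_13_general {H : Type*} [NormedAddCommGroup H] [InnerProductSpace ℝ H]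
    (φ : H → ℝ) (c : ℝ)
    (hφ : ContDiff ℝ 1 φ)
    (hrad : ∀ u : H, 1 ≤ ‖u‖ → φ u = c → fderiv ℝ φ u u < 0)
    (hray : ∀ u ∈ Metric.sphere (0 : H) 1,
      Tendsto (fun μ : ℝ => φ (μ • u)) atTop atBot)
    (hS : ∀ u ∈ Metric.sphere (0 : H) 1, c < φ u) :
    ∃ ρ : H → ℝ,
      (ContinuousOn ρ (Metric.sphere (0 : H) 1) ∧
        (∀ u ∈ Metric.sphere (0 : H) 1, 1 < ρ u) ∧
        (∀ u ∈ Metric.sphere (0 : H) 1, ∀ μ : ℝ, 1 < μ →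
          (μ < ρ u → c < φ (μ • u)) ∧
          (μ = ρ u → φ (μ • u) = c) ∧
          (ρ u < μ → φ (μ • u) < c))) ∧
      -- uniqueness
      (∀ ρ' : H → ℝ,
        (ContinuousOn ρ' (Metric.sphere (0 : H) 1) ∧
          (∀ u ∈ Metric.sphere (0 : H) 1, 1 < ρ' u) ∧
          (∀ u ∈ Metric.sphere (0 : H) 1, ∀ μ : ℝ, 1 < μ →
            (μ < ρ' u → c < φ (μ • u)) ∧
            (μ = ρ' u → φ (μ • u) = c) ∧
            (ρ' u < μ → φ (μ • u) < c))) →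
        ∀ u ∈ Metric.sphere (0 : H) 1, ρ' u = ρ u) := by
  have hdiff : Differentiable ℝ φ := hφ.differentiable one_ne_zero
  have hneg : ∀ u ∈ Metric.sphere (0 : H) 1, ∀ t : ℝ, 1 < t → φ (t • u) = c →
      fderiv ℝ φ (t • u) u < 0 := by
    intro u hu t ht htc
    have hnorm : ‖t • u‖ = t := by
      rw [norm_smul, mem_sphere_zero_iff_norm.mp hu, mul_one, Real.norm_of_nonneg (by linarith)]
    have h := hrad (t • u) (by rw [hnorm]; exact ht.le) htc
    rw [map_smul, smul_eq_mul] at h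
    exact neg_of_mul_neg_right h (by linarith)
  have hcross : ∀ u, ∃ r, u ∈ Metric.sphere (0 : H) 1 →
      IsDowncrossing (fun μ : ℝ => φ (μ • u)) c 1 r := by
    intro u
    by_cases hu : u ∈ Metric.sphere (0 : H) 1
    · obtain ⟨r, hr⟩ := exists_isDowncrossing (fun t => hasDerivAt_comp_smul_const (hdiff _))
        (hneg u hu) (by simpa using hS u hu) (hray u hu)
      exact ⟨r, fun _ => hr⟩
    · exact ⟨0, fun h => absurd h hu⟩
  choose ρ hρ using hcross
  refine ⟨ρ, ⟨?_, fun u hu => (hρ u hu).1, fun u hu => (hρ u hu).2⟩, ?_⟩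
  · exact continuousOn_of_isDowncrossing
      (fun μ => hφ.continuous.comp (continuous_const_smul μ)) hρ
  · rintro ρ' ⟨-, hρ'1, hρ'⟩ u hu
    exact IsDowncrossing.unique (hρ u hu) ⟨hρ'1 u hu, hρ' u hu⟩

/-- Implicit-function step for critical groups at infinity: if `φ(u) = ‖u‖²/2 − ψ(u)` is
`C¹` on a Hilbert space, the radial derivative `φ'(u)(u)` is negative on the level set
`{φ = c}` outside the unit ball, `φ(μu) → −∞` along each ray, and `φ > c` on the unit
sphere, then there is a unique continuous `ρ : S → (1,∞)` such that for `μ > 1`: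
`φ(μu) > c` iff `μ < ρ(u)`, `φ(μu) = c` iff `μ = ρ(u)`, `φ(μu) < c` iff `μ > ρ(u)`. -/
theorem stmt_13 {H : Type*} [NormedAddCommGroup H] [InnerProductSpace ℝ H]
    (φ ψ : H → ℝ) (c : ℝ)
    (hφ : ContDiff ℝ 1 φ)
    (hφψ : ∀ u : H, φ u = ‖u‖ ^ 2 / 2 - ψ u)
    (hrad : ∀ u : H, 1 ≤ ‖u‖ → φ u = c → fderiv ℝ φ u u < 0)
    (hray : ∀ u ∈ Metric.sphere (0 : H) 1,
      Tendsto (fun μ : ℝ => φ (μ • u)) atTop atBot)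
    (hS : ∀ u ∈ Metric.sphere (0 : H) 1, c < φ u) :
    ∃ ρ : H → ℝ,
      (ContinuousOn ρ (Metric.sphere (0 : H) 1) ∧
        (∀ u ∈ Metric.sphere (0 : H) 1, 1 < ρ u) ∧
        (∀ u ∈ Metric.sphere (0 : H) 1, ∀ μ : ℝ, 1 < μ →
          (μ < ρ u → c < φ (μ • u)) ∧
          (μ = ρ u → φ (μ • u) = c) ∧
          (ρ u < μ → φ (μ • u) < c))) ∧
      -- uniqueness
      (∀ ρ' : H → ℝ,
        (ContinuousOn ρ' (Metric.sphere (0 : H) 1) ∧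
          (∀ u ∈ Metric.sphere (0 : H) 1, 1 < ρ' u) ∧
          (∀ u ∈ Metric.sphere (0 : H) 1, ∀ μ : ℝ, 1 < μ →
            (μ < ρ' u → c < φ (μ • u)) ∧
            (μ = ρ' u → φ (μ • u) = c) ∧
            (ρ' u < μ → φ (μ • u) < c))) →
        ∀ u ∈ Metric.sphere (0 : H) 1, ρ' u = ρ u) :=
  stmt_13_general φ c hφ hrad hray hS
end

section
/- Let X be a Banach space and φ ∈ C¹(X) satisfy the Cerami condition with K(φ₊) = {0, u₊} and φ(0) = 0 < φ(u₊). Choose a < 0 < b < φ(u₊) and set A = φ^a, B = φ^b (closed sublevel sets). If H_k(X, A) = 0 for all k (vanishing critical groups at infinity) and H_{k}(B, A) = C_k(φ, 0) = δ_{k,0}ℝ, then the long exact sequence of the triple yields C_k(φ, u₊) = H_k(X, B) = δ_{k,1}ℝ for all k ≥ 0. -/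
/-- The long-exact-sequence computation of `C_k(φ, u₊)`: with `A = φ^a ⊂ B = φ^b` sublevel
sets of a `C¹` functional `φ` with `K(φ) = {0, u₊}`, `φ(0) = 0 < φ(u₊)`, `a < 0 < b <
φ(u₊)`, write `HXA k = H_k(X,A) = C_k(φ,∞)`, `HXB k = H_k(X,B) = C_k(φ,u₊)`,
`HBA k = H_k(B,A) = C_k(φ,0)`. If `H_k(X,A) = 0` for all `k` and
`H_k(B,A) = δ_{k,0} ℝ`, then the long exact homology sequence
`H_{k+1}(X,A) → H_{k+1}(X,B) → H_k(B,A) → H_k(X,A)` yields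
`C_k(φ,u₊) = H_k(X,B) = δ_{k,1} ℝ` for all `k ≥ 0`. -/
theorem stmt_19 {X : Type*} [NormedAddCommGroup X] [NormedSpace ℝ X]
    (φ : X → ℝ) (hφ : ContDiff ℝ 1 φ) (uP : X) (huP : uP ≠ 0)
    (hK : {v : X | fderiv ℝ φ v = 0} = {0, uP})
    (hφ0 : φ 0 = 0) (hφu : 0 < φ uP)
    (a b : ℝ) (ha : a < 0) (hb : 0 < b) (hbu : b < φ uP)
    (A B : Set X) (hA : A = {v : X | φ v ≤ a}) (hB : B = {v : X | φ v ≤ b})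
    -- abstract relative homology ℝ-modules of the pairs (X,A), (X,B), (B,A)
    (HXA HXB HBA : ℕ → Type)
    [∀ k, AddCommGroup (HXA k)] [∀ k, Module ℝ (HXA k)]
    [∀ k, AddCommGroup (HXB k)] [∀ k, Module ℝ (HXB k)]
    [∀ k, AddCommGroup (HBA k)] [∀ k, Module ℝ (HBA k)]
    -- the maps of the long exact sequence of the triple (X, B, A)
    (j : ∀ k, HXA k →ₗ[ℝ] HXB k)
    (del : ∀ k, HXB (k + 1) →ₗ[ℝ] HBA k)
    (i : ∀ k, HBA k →ₗ[ℝ] HXA k)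
    (hex₁ : ∀ k, Function.Exact (j (k + 1)) (del k))
    (hex₂ : ∀ k, Function.Exact (del k) (i k))
    (hsurj : Function.Surjective (j 0))
    -- vanishing of the critical groups at infinity: H_k(X,A) = 0
    (hHXA : ∀ k, Subsingleton (HXA k))
    -- H_k(B,A) = C_k(φ,0) = δ_{k,0} ℝ
    (hHBA0 : Nonempty (HBA 0 ≃ₗ[ℝ] ℝ))
    (hHBAk : ∀ k, k ≠ 0 → Subsingleton (HBA k)) :
    -- conclusion: C_k(φ,u₊) = H_k(X,B) = δ_{k,1} ℝ
    Nonempty (HXB 1 ≃ₗ[ℝ] ℝ) ∧ ∀ k, k ≠ 1 → Subsingleton (HXB k) := by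
  -- del k is bijective for every k, since HXA is trivial
  have hbij : ∀ k, Function.Bijective (del k) := by
    intro k
    constructor
    · intro x y hxy
      have : del k (x - y) = 0 := by simp [map_sub, hxy]
      rcases ((hex₁ k) (x - y)).mp this with ⟨z, hz⟩
      have hz0 : z = 0 := Subsingleton.elim _ _
      have : x - y = 0 := by rw [← hz, hz0, map_zero]
      exact sub_eq_zero.mp this
    · intro y
      have hy : i k y = 0 := Subsingleton.elim _ _
      exact ((hex₂ k) y).mp hy
  refine ⟨?_, ?_⟩
  · obtain ⟨e⟩ := hHBA0
    exact ⟨(LinearEquiv.ofBijective (del 0) (hbij 0)).trans e⟩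
  · intro k hk
    match k, hk with
    | 0, _ =>
      constructor
      intro x y
      rcases hsurj x with ⟨x', hx'⟩
      rcases hsurj y with ⟨y', hy'⟩
      rw [← hx', ← hy', Subsingleton.elim x' y']
    | (n + 2), _ =>
      have hsub : Subsingleton (HBA (n + 1)) := hHBAk (n + 1) (by omega)
      constructor
      intro x y
      exact (hbij (n + 1)).1 (Subsingleton.elim _ _)
end
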